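/- arXiv:2106.01642 — 5 statements merged into one kernel-verified Lean document; each statement's English description precedes it below -/
import Mathlib

section
/- If the matrix H̄ is positive semidefinite, then the matrix H is positive semidefinite. -/
open Matrix

/-- The `(N+1)×(N+1)` dual matrix `H` (0-based indices: rows/cols `0,…,N-1` are the
graph nodes, index `N` is node `N+1`): `H_{ij} = L_{ij}` off-diagonal for `i,j < N`,
`H_{ii} = y_i + L_{ii}` for `i < N`, `H_{i,N} = H_{N,i} = z_i` for `i < M` and `0`
for `M ≤ i < N`, and `H_{N,N} = y_N`. -/
def Hmat (N M : ℕ) (L : Matrix (Fin N) (Fin N) ℝ)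
    (y : Fin (N + 1) → ℝ) (z : Fin M → ℝ) :
    Matrix (Fin (N + 1)) (Fin (N + 1)) ℝ :=
  Matrix.of fun i j =>
    if hi : (i : ℕ) < N then
      if hj : (j : ℕ) < N then
        (if i = j then y i else 0) + L ⟨i, hi⟩ ⟨j, hj⟩
      else
        if h : (i : ℕ) < M then z ⟨i, h⟩ else 0
    else
      if hj : (j : ℕ) < N then
        if h : (j : ℕ) < M then z ⟨j, h⟩ else 0
      else y i

/-- The augmented `(N+2)×(N+2)` matrix `H̄` (0-based: index `N` is node `N+1`,
index `N+1` is node `N+2`). -/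
def Hbar (N M M₁ : ℕ) (hM₁M : M₁ < M)
    (L : Matrix (Fin N) (Fin N) ℝ) (y : Fin (N + 1) → ℝ) (z : Fin M → ℝ) :
    Matrix (Fin (N + 2)) (Fin (N + 2)) ℝ :=
  Matrix.of fun i j =>
    if hi : (i : ℕ) < N then
      if hj : (j : ℕ) < N then
        (if i = j then y ⟨i, by omega⟩ else 0) + L ⟨i, hi⟩ ⟨j, hj⟩
      else if (j : ℕ) = N then
        if h : (i : ℕ) < M₁ then z ⟨i, by omega⟩ else 0
      else
        if h : M₁ ≤ (i : ℕ) ∧ (i : ℕ) < M then z ⟨i, h.2⟩ else 0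
    else if hi' : (i : ℕ) = N then
      if hj : (j : ℕ) < N then
        if h : (j : ℕ) < M₁ then z ⟨j, by omega⟩ else 0
      else if (j : ℕ) = N then -(∑ k : Fin M, if (k : ℕ) < M₁ then z k else 0)
      else 0
    else
      if hj : (j : ℕ) < N then
        if h : M₁ ≤ (j : ℕ) ∧ (j : ℕ) < M then z ⟨j, h.2⟩ else 0
      else if (j : ℕ) = N then 0
      else y (Fin.last N) + ∑ k : Fin M, if (k : ℕ) < M₁ then z k else 0

def Bmat (N : ℕ) : Matrix (Fin (N + 2)) (Fin (N + 1)) ℝ :=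
  Matrix.of fun k i => if ((k : ℕ) = (i : ℕ)) ∨ ((k : ℕ) = N + 1 ∧ (i : ℕ) = N) then 1 else 0

lemma sumB_left (N : ℕ) (g : Fin (N + 2) → ℝ) (i : Fin (N + 1)) :
    ∑ k, Bmat N k i * g k
      = g i.castSucc + (if (i : ℕ) = N then g (Fin.last (N + 1)) else 0) := by
  have h : ∀ k : Fin (N + 2), Bmat N k i * g k
      = (if k = i.castSucc then g k else 0)
        + (if (i : ℕ) = N then (if k = Fin.last (N + 1) then g k else 0) else 0) := by
    intro k
    simp only [Bmat, Matrix.of_apply, Fin.ext_iff, Fin.coe_castSucc, Fin.val_last]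
    split_ifs <;> simp_all
  simp only [h, Finset.sum_add_distrib, Finset.sum_ite_eq' Finset.univ, Finset.mem_univ,
    if_true]
  by_cases hi : (i : ℕ) = N <;> simp [hi]

lemma sumB_right (N : ℕ) (g : Fin (N + 2) → ℝ) (j : Fin (N + 1)) :
    ∑ l, g l * Bmat N l j
      = g j.castSucc + (if (j : ℕ) = N then g (Fin.last (N + 1)) else 0) := by
  simpa [mul_comm] using sumB_left N g j

/-- if `H̄` is positive semidefinite, then `H` is positive semidefinite. -/
theorem H_psd_of_Hbar_psd (N M M₁ : ℕ) (hM₁ : 1 ≤ M₁) (hM₁M : M₁ < M) (hMN : M ≤ N)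
    (L : Matrix (Fin N) (Fin N) ℝ) (hL : L.IsSymm)
    (y : Fin (N + 1) → ℝ) (z : Fin M → ℝ)
    (hbar : (Hbar N M M₁ hM₁M L y z).PosSemidef) :
    (Hmat N M L y z).PosSemidef := by
  have key : Hmat N M L y z = (Bmat N)ᴴ * Hbar N M M₁ hM₁M L y z * Bmat N := by
    ext i j
    have h1 : ((Bmat N)ᴴ * Hbar N M M₁ hM₁M L y z * Bmat N) i j
        = (Hbar N M M₁ hM₁M L y z * Bmat N) i.castSucc j
          + (if (i : ℕ) = N then
              (Hbar N M M₁ hM₁M L y z * Bmat N) (Fin.last (N + 1)) j else 0) := by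
      rw [Matrix.mul_assoc, Matrix.mul_apply]
      simpa [Matrix.conjTranspose_apply] using
        sumB_left N (fun k => (Hbar N M M₁ hM₁M L y z * Bmat N) k j) i
    have h2 : ∀ k, (Hbar N M M₁ hM₁M L y z * Bmat N) k j
        = Hbar N M M₁ hM₁M L y z k j.castSucc
          + (if (j : ℕ) = N then Hbar N M M₁ hM₁M L y z k (Fin.last (N + 1)) else 0) := by
      intro k
      rw [Matrix.mul_apply]
      exact sumB_right N (fun l => Hbar N M M₁ hM₁M L y z k l) j
    rw [h1, h2, h2]
    have hi1 : (i : ℕ) < N + 1 := i.isLt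
    have hj1 : (j : ℕ) < N + 1 := j.isLt
    by_cases hi : (i : ℕ) < N <;> by_cases hj : (j : ℕ) < N
    · have hiN : ¬ (i : ℕ) = N := by omega
      have hjN : ¬ (j : ℕ) = N := by omega
      simp only [Hmat, Hbar, Matrix.of_apply, Fin.coe_castSucc, Fin.val_last,
        hi, hj, hiN, hjN, dif_pos, if_false]
      simp [Fin.ext_iff]
    · have hjN : (j : ℕ) = N := by omega
      have hiN : ¬ (i : ℕ) = N := by omega
      simp only [Hmat, Hbar, Matrix.of_apply, Fin.coe_castSucc, Fin.val_last,
        hi, hj, hiN, hjN, dif_pos, dif_neg, if_true, if_false]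
      have : ¬ (N : ℕ) < N := lt_irrefl N
      rw [dif_neg (by omega : ¬ (N:ℕ) < N)]
      split_ifs <;> first | omega | ring | (exfalso; omega) | simp
    · have hiN : (i : ℕ) = N := by omega
      have hjN : ¬ (j : ℕ) = N := by omega
      simp only [Hmat, Hbar, Matrix.of_apply, Fin.coe_castSucc, Fin.val_last,
        hi, hj, hiN, hjN, dif_pos, dif_neg, if_true, if_false]
      split_ifs <;> first | omega | ring | (exfalso; omega) | simp
    · have hiN : (i : ℕ) = N := by omega
      have hjN : (j : ℕ) = N := by omega
      have hil : i = Fin.last N := Fin.ext (by simpa using hiN)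
      simp only [Hmat, Hbar, Matrix.of_apply, Fin.coe_castSucc, Fin.val_last,
        hi, hj, hiN, hjN, dif_pos, dif_neg, if_true, if_false, hil]
      have hA : ¬ (N : ℕ) < N := by omega
      have hB2 : ¬ (N + 1 : ℕ) < N := by omega
      have hC : ¬ (N + 1 : ℕ) = N := by omega
      simp only [hA, hB2, hC, dite_false, ite_false, if_false, dif_neg]
      ring
  rw [key]
  exact hbar.conjTranspose_mul_mul_same (Bmat N)
end

section
/- (Lemma 1) Assume H is positive semidefinite. Then the smallest eigenvalue of H̄ is a lower bound for the smallest eigenvalue of H, i.e., λ_min(H̄) ≤ λ_min(H). -/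
open Matrix

set_option maxHeartbeats 1000000 in
lemma Hentry (N M M₁ : ℕ) (hM₁M : M₁ < M) (hMN : M ≤ N)
    (L : Matrix (Fin N) (Fin N) ℝ) (y : Fin (N + 1) → ℝ) (z : Fin M → ℝ)
    (i j : Fin (N + 1)) :
    Hmat N M L y z i j =
      Hbar N M M₁ hM₁M L y z i.castSucc j.castSucc
      + (if i = Fin.last N then Hbar N M M₁ hM₁M L y z (Fin.last (N+1)) j.castSucc else 0)
      + (if j = Fin.last N then Hbar N M M₁ hM₁M L y z i.castSucc (Fin.last (N+1)) else 0)
      + (if i = Fin.last N ∧ j = Fin.last N then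
          Hbar N M M₁ hM₁M L y z (Fin.last (N+1)) (Fin.last (N+1)) else 0) := by
  by_cases hiN : i = Fin.last N <;> by_cases hjN : j = Fin.last N
  · subst hiN; subst hjN
    simp only [Hmat, Hbar, Matrix.of_apply, Fin.coe_castSucc, Fin.val_last, Fin.ext_iff,
      if_true, and_self]
    split_ifs <;> first | rfl | (exfalso; omega) | omega | ring1 | simp
  · subst hiN
    simp only [Hmat, Hbar, Matrix.of_apply, Fin.coe_castSucc, Fin.val_last, Fin.ext_iff,
      and_false, if_true, if_false]
    have hj' : (j : ℕ) < N := by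
      have := j.isLt; rcases Nat.lt_succ_iff_lt_or_eq.mp this with h | h
      · exact h
      · exact absurd (Fin.ext h : j = Fin.last N) hjN
    split_ifs <;> first | rfl | (exfalso; omega) | omega | ring1 | simp
  · subst hjN
    simp only [Hmat, Hbar, Matrix.of_apply, Fin.coe_castSucc, Fin.val_last, Fin.ext_iff,
      false_and, if_true, if_false]
    have hi' : (i : ℕ) < N := by
      have := i.isLt; rcases Nat.lt_succ_iff_lt_or_eq.mp this with h | h
      · exact h
      · exact absurd (Fin.ext h : i = Fin.last N) hiN
    split_ifs <;> first | rfl | (exfalso; omega) | omega | ring1 | simp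
  · simp only [Hmat, Hbar, Matrix.of_apply, Fin.coe_castSucc, Fin.val_last, Fin.ext_iff,
      if_false, false_and]
    have hj' : (j : ℕ) < N := by
      have := j.isLt; rcases Nat.lt_succ_iff_lt_or_eq.mp this with h | h
      · exact h
      · exact absurd (Fin.ext h : j = Fin.last N) hjN
    have hi' : (i : ℕ) < N := by
      have := i.isLt; rcases Nat.lt_succ_iff_lt_or_eq.mp this with h | h
      · exact h
      · exact absurd (Fin.ext h : i = Fin.last N) hiN
    split_ifs <;> first | rfl | (exfalso; omega) | omega | ring1 | simp

lemma rayleigh_inf {n : Type*} [Fintype n] [DecidableEq n]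
    (A : Matrix n n ℝ) (hA : A.IsHermitian) (μ : ℝ)
    (hμ : ∀ i, μ ≤ hA.eigenvalues i) (x : n → ℝ) :
    μ * (x ⬝ᵥ x) ≤ x ⬝ᵥ (A *ᵥ x) := by
  have hdiag : Matrix.PosSemidef (Matrix.diagonal (fun i => hA.eigenvalues i - μ)) :=
    Matrix.posSemidef_diagonal_iff.mpr fun i => sub_nonneg.2 (hμ i)
  set U : Matrix n n ℝ := (Matrix.IsHermitian.eigenvectorUnitary hA : Matrix n n ℝ) with hUdef
  have hU : U * star U = 1 :=
    Matrix.mem_unitaryGroup_iff.mp (Matrix.IsHermitian.eigenvectorUnitary hA).2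
  have hd : Matrix.diagonal (fun i => hA.eigenvalues i - μ)
      = Matrix.diagonal (RCLike.ofReal ∘ hA.eigenvalues) - μ • (1 : Matrix n n ℝ) := by
    ext i j
    by_cases h : i = j <;>
      simp [Matrix.diagonal_apply, Matrix.one_apply, h, Matrix.smul_apply]
  have hkey : A - μ • (1 : Matrix n n ℝ)
      = U * Matrix.diagonal (fun i => hA.eigenvalues i - μ) * star U := by
    rw [hd, Matrix.mul_sub, Matrix.sub_mul]
    conv_lhs => rw [hA.spectral_theorem, Unitary.conjStarAlgAut_apply]
    congr 1
    rw [Matrix.mul_smul, Matrix.mul_one, Matrix.smul_mul, hU]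
  have hpsd2 : Matrix.PosSemidef (A - μ • (1 : Matrix n n ℝ)) := by
    rw [hkey]
    have := hdiag.mul_mul_conjTranspose_same U
    rwa [← Matrix.star_eq_conjTranspose] at this
  have h0 : 0 ≤ x ⬝ᵥ ((A - μ • (1 : Matrix n n ℝ)) *ᵥ x) := by
    simpa using hpsd2.dotProduct_mulVec_nonneg x
  rw [Matrix.sub_mulVec, dotProduct_sub, Matrix.smul_mulVec, Matrix.one_mulVec,
    dotProduct_smul, smul_eq_mul] at h0
  linarith

set_option maxHeartbeats 1000000 in
/-- Lemma 1: if `H` is positive semidefinite, then the smallest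
eigenvalue of `H̄` is a lower bound for the smallest eigenvalue of `H`:
`λ_min(H̄) ≤ λ_min(H)`. -/
theorem lambda_min_Hbar_le_lambda_min_H (N M M₁ : ℕ)
    (hM₁ : 1 ≤ M₁) (hM₁M : M₁ < M) (hMN : M ≤ N)
    (L : Matrix (Fin N) (Fin N) ℝ) (hL : L.IsSymm)
    (y : Fin (N + 1) → ℝ) (z : Fin M → ℝ)
    (hH : (Hmat N M L y z).IsHermitian)
    (hHbar : (Hbar N M M₁ hM₁M L y z).IsHermitian)
    (hpsd : (Hmat N M L y z).PosSemidef) :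
    ⨅ i, hHbar.eigenvalues i ≤ ⨅ i, hH.eigenvalues i := by
  classical
  obtain ⟨i₀, -, hi₀⟩ := Finset.exists_min_image Finset.univ hH.eigenvalues ⟨0, Finset.mem_univ 0⟩
  obtain ⟨i₁, -, hi₁⟩ := Finset.exists_min_image Finset.univ hHbar.eigenvalues ⟨0, Finset.mem_univ 0⟩
  have hi₀' : ∀ k, hH.eigenvalues i₀ ≤ hH.eigenvalues k := fun k => hi₀ k (Finset.mem_univ k)
  have hi₁' : ∀ k, hHbar.eigenvalues i₁ ≤ hHbar.eigenvalues k := fun k => hi₁ k (Finset.mem_univ k)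
  have hinfH : ⨅ i, hH.eigenvalues i = hH.eigenvalues i₀ :=
    le_antisymm (ciInf_le (Finite.bddBelow_range _) i₀) (le_ciInf hi₀')
  refine le_trans (ciInf_le (Finite.bddBelow_range _) i₁) ?_
  rw [hinfH]
  set μ : ℝ := hH.eigenvalues i₀ with hμdef
  set ν : ℝ := hHbar.eigenvalues i₁ with hνdef
  set v : Fin (N + 1) → ℝ := ⇑(hH.eigenvectorBasis i₀) with hvdef
  have hev : Hmat N M L y z *ᵥ v = μ • v := hH.mulVec_eigenvectorBasis i₀
  have hvq : v ⬝ᵥ (Hmat N M L y z *ᵥ v) = μ * (v ⬝ᵥ v) := by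
    rw [hev, dotProduct_smul, smul_eq_mul]
  have hvne : v ≠ 0 := by
    intro h
    have h1 : (hH.eigenvectorBasis i₀ : EuclideanSpace ℝ (Fin (N+1))) = 0 := by
      ext k; exact congrFun h k
    exact hH.eigenvectorBasis.toBasis.ne_zero i₀ (by simpa using h1)
  have hvpos : 0 < v ⬝ᵥ v := by
    rcases lt_or_eq_of_le (dotProduct_self_star_nonneg v) with h | h
    · simpa using h
    · exact absurd (dotProduct_self_eq_zero.mp (by simpa using h.symm)) hvne
  set w : Fin (N + 2) → ℝ :=
    fun k => if h : (k : ℕ) < N + 1 then v ⟨k, h⟩ else v (Fin.last N) with hwdef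
  have hwc : ∀ k : Fin (N + 1), w k.castSucc = v k := fun k => dif_pos k.isLt
  have hwl : w (Fin.last (N + 1)) = v (Fin.last N) := dif_neg (lt_irrefl (N + 1))
  have hww : w ⬝ᵥ w = v ⬝ᵥ v + v (Fin.last N) * v (Fin.last N) := by
    simp only [dotProduct]
    rw [Fin.sum_univ_castSucc]
    simp only [hwc, hwl]
  -- the key quadratic form identity
  have hkey : w ⬝ᵥ (Hbar N M M₁ hM₁M L y z *ᵥ w) = v ⬝ᵥ (Hmat N M L y z *ᵥ v) := by
    simp only [dotProduct, mulVec, Finset.mul_sum]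
    calc
      ∑ i : Fin (N+2), ∑ j : Fin (N+2), w i * (Hbar N M M₁ hM₁M L y z i j * w j)
          = (∑ i : Fin (N+1), ∑ j : Fin (N+1),
              v i * (Hbar N M M₁ hM₁M L y z i.castSucc j.castSucc * v j))
            + (∑ j : Fin (N+1),
              v (Fin.last N) * (Hbar N M M₁ hM₁M L y z (Fin.last (N+1)) j.castSucc * v j))
            + (∑ i : Fin (N+1),
              v i * (Hbar N M M₁ hM₁M L y z i.castSucc (Fin.last (N+1)) * v (Fin.last N)))
            + v (Fin.last N) * (Hbar N M M₁ hM₁M L y z (Fin.last (N+1)) (Fin.last (N+1))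
                * v (Fin.last N)) := by
          rw [Fin.sum_univ_castSucc]
          simp only [Fin.sum_univ_castSucc, hwc, hwl]
          rw [Finset.sum_add_distrib]
          ring
      _ = ∑ i : Fin (N+1), ∑ j : Fin (N+1), v i * (Hmat N M L y z i j * v j) := by
          have step : ∀ i : Fin (N+1),
              ∑ j : Fin (N+1), v i * (Hmat N M L y z i j * v j)
              = (∑ j : Fin (N+1),
                  v i * (Hbar N M M₁ hM₁M L y z i.castSucc j.castSucc * v j))
                + (if i = Fin.last N then
                    ∑ j : Fin (N+1),
                      v i * (Hbar N M M₁ hM₁M L y z (Fin.last (N+1)) j.castSucc * v j)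
                   else 0)
                + v i * (Hbar N M M₁ hM₁M L y z i.castSucc (Fin.last (N+1)) * v (Fin.last N))
                + (if i = Fin.last N then
                    v i * (Hbar N M M₁ hM₁M L y z (Fin.last (N+1)) (Fin.last (N+1))
                      * v (Fin.last N))
                   else 0) := by
            intro i
            have expand : ∀ j : Fin (N+1),
                v i * (Hmat N M L y z i j * v j)
                = v i * (Hbar N M M₁ hM₁M L y z i.castSucc j.castSucc * v j)
                  + (if i = Fin.last N then
                      v i * (Hbar N M M₁ hM₁M L y z (Fin.last (N+1)) j.castSucc * v j) else 0)
                  + (if j = Fin.last N then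
                      v i * (Hbar N M M₁ hM₁M L y z i.castSucc (Fin.last (N+1)) * v j) else 0)
                  + (if i = Fin.last N ∧ j = Fin.last N then
                      v i * (Hbar N M M₁ hM₁M L y z (Fin.last (N+1)) (Fin.last (N+1)) * v j)
                     else 0) := by
              intro j
              rw [Hentry N M M₁ hM₁M hMN L y z i j]
              split_ifs <;> ring
            rw [Finset.sum_congr rfl (fun j _ => expand j)]
            simp only [Finset.sum_add_distrib]
            congr 1
            · congr 1
              · congr 1
                · split_ifs with h <;> simp
              · rw [Finset.sum_ite_eq' Finset.univ (Fin.last N)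
                  (fun j => v i * (Hbar N M M₁ hM₁M L y z i.castSucc (Fin.last (N+1)) * v j))]
                simp
            · simp only [ite_and]
              split_ifs with h
              · rw [Finset.sum_ite_eq' Finset.univ (Fin.last N)
                  (fun j => v i * (Hbar N M M₁ hM₁M L y z (Fin.last (N+1)) (Fin.last (N+1)) * v j))]
                simp
              · simp
          rw [Finset.sum_congr rfl (fun i _ => step i)]
          simp only [Finset.sum_add_distrib]
          rw [Finset.sum_ite_eq' Finset.univ (Fin.last N)
            (fun i => ∑ j : Fin (N+1),
              v i * (Hbar N M M₁ hM₁M L y z (Fin.last (N+1)) j.castSucc * v j))]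
          rw [Finset.sum_ite_eq' Finset.univ (Fin.last N)
            (fun i => v i * (Hbar N M M₁ hM₁M L y z (Fin.last (N+1)) (Fin.last (N+1))
              * v (Fin.last N)))]
          simp only [Finset.mem_univ, if_true]
          try ring
  have hray := rayleigh_inf (Hbar N M M₁ hM₁M L y z) hHbar ν hi₁' w
  rw [hkey, hvq, hww] at hray
  have hμ0 : 0 ≤ μ := hpsd.eigenvalues_nonneg i₀
  nlinarith [sq_nonneg (v (Fin.last N)), hvpos, hray, hμ0]
end

section
/- Regard H(y,z), H̄(y,z) and H̃(y,z) as functions of the dual variables (y,z) with L, W and φ ≥ 0 fixed, and let F(y,z) = ∑_{i=1}^{N+1} y_i + ∑_{i=1}^{M} b_i z_i. Then the feasible sets are nested: for every (y,z), if H̄(y,z) is positive semidefinite then H(y,z) is positive semidefinite, and if H(y,z) is positive semidefinite then H̃(y,z) is positive semidefinite. Consequently, if the set S̄ = {(y,z) : H̄(y,z) ⪰ 0} is nonempty and F is bounded below on S̃ = {(y,z) : H̃(y,z) ⪰ 0}, then inf_{S̃} F ≤ inf_{S} F ≤ inf_{S̄} F, where S = {(y,z) : H(y,z) ⪰ 0}.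 -/
open Matrix

/-- The `(N+1)×(N+1)` matrix `P` (0-based indices): `P_{ii} = 1` for `i < M`,
`P_{i,N} = P_{N,i} = -1` for `i < M`, `P_{N,N} = M`, all other entries `0`. -/
def Pmat (N M : ℕ) : Matrix (Fin (N + 1)) (Fin (N + 1)) ℝ :=
  Matrix.of fun i j =>
    if (i : ℕ) < M ∧ i = j then 1
    else if (i : ℕ) < M ∧ (j : ℕ) = N then -1
    else if (j : ℕ) < M ∧ (i : ℕ) = N then -1
    else if (i : ℕ) = N ∧ (j : ℕ) = N then (M : ℝ)
    else 0

/-- The dual objective `F(y,z) = ∑_{i=1}^{N+1} y_i + ∑_{i=1}^{M} b_i z_i`. -/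
def Fobj (N M : ℕ) (b : Fin M → ℝ) (p : (Fin (N + 1) → ℝ) × (Fin M → ℝ)) : ℝ :=
  (∑ i, p.1 i) + ∑ i, b i * p.2 i

lemma isHermitian_of_symm' {n : Type*} [Fintype n] {A : Matrix n n ℝ}
    (h : ∀ i j, A j i = A i j) : A.IsHermitian := by
  ext i j
  simpa [Matrix.conjTranspose_apply] using h i j

lemma quadform_expand {n : ℕ} (A : Matrix (Fin n) (Fin n) ℝ) (x : Fin n → ℝ) :
    dotProduct (star x) (A *ᵥ x) = ∑ i, x i * ∑ j, A i j * x j := by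
  simp [dotProduct, Matrix.mulVec]

lemma Hmat_symm {N M : ℕ} (L : Matrix (Fin N) (Fin N) ℝ) (hL : L.IsSymm)
    (y : Fin (N + 1) → ℝ) (z : Fin M → ℝ) (i j : Fin (N + 1)) :
    Hmat N M L y z j i = Hmat N M L y z i j := by
  rcases eq_or_ne i j with rfl | hne
  · rfl
  · have hv : (i : ℕ) ≠ (j : ℕ) := fun h => hne (Fin.ext h)
    have hi' := i.isLt
    have hj' := j.isLt
    simp only [Hmat, Matrix.of_apply]
    split_ifs <;> first
      | rfl
      | omega
      | (rw [hL.apply])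
      | simp_all

lemma Pmat_symm {N M : ℕ} (i j : Fin (N + 1)) : Pmat N M j i = Pmat N M i j := by
  rcases eq_or_ne i j with rfl | hne
  · rfl
  · have hv : (i : ℕ) ≠ (j : ℕ) := fun h => hne (Fin.ext h)
    simp only [Pmat, Matrix.of_apply]
    split_ifs <;> first | rfl | omega | simp_all
lemma count_aux {N M : ℕ} (hMN : M ≤ N) (c : ℝ) :
    ∑ i : Fin N, (if (i : ℕ) < M then c else 0) = M * c := by
  rw [Fin.sum_univ_eq_sum_range (fun i => if i < M then c else 0) N,
    ← Finset.sum_filter]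
  have h : (Finset.range N).filter (fun i => i < M) = Finset.range M := by
    ext a; simp; omega
  rw [h, Finset.sum_const, Finset.card_range, nsmul_eq_mul]

lemma Pmat_quadform {N M : ℕ} (hMN : M ≤ N) (x : Fin (N + 1) → ℝ) :
    ∑ i, x i * ∑ j, Pmat N M i j * x j
      = ∑ i : Fin N,
          (if (i : ℕ) < M then (x i.castSucc - x (Fin.last N)) ^ 2 else 0) := by
  have hlast : ((Fin.last N : Fin (N + 1)) : ℕ) = N := rfl
  have hNM : ¬ (N < M) := by omega
  have hrow_lt : ∀ i : Fin (N + 1), (i : ℕ) < M →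
      ∑ j, Pmat N M i j * x j = x i - x (Fin.last N) := by
    intro i hi
    have hiN' : (i : ℕ) ≠ N := by omega
    have hiN : i ≠ Fin.last N := fun h => hiN' (by rw [h]; rfl)
    have hpt : ∀ j : Fin (N + 1), Pmat N M i j * x j =
        (if i = j then x j else 0) + (if j = Fin.last N then -x j else 0) := by
      intro j
      have c3 : ¬((j : ℕ) < M ∧ (i : ℕ) = N) := fun h => hiN' h.2
      have c4 : ¬((i : ℕ) = N ∧ (j : ℕ) = N) := fun h => hiN' h.1
      simp only [Pmat, Matrix.of_apply, hi, true_and, if_neg c3, if_neg c4]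
      by_cases h1 : i = j
      · subst h1; simp [hiN]
      · by_cases h2 : j = Fin.last N
        · subst h2; simp [hiN, hlast, h1]
        · have hjN : (j : ℕ) ≠ N := fun h => h2 (Fin.ext h)
          simp [h1, hjN, h2]
    rw [Finset.sum_congr rfl fun j _ => hpt j, Finset.sum_add_distrib]
    simp [Finset.sum_ite_eq, Finset.sum_ite_eq', sub_eq_add_neg]
  have hrow_mid : ∀ i : Fin (N + 1), ¬ (i : ℕ) < M → (i : ℕ) ≠ N →
      ∑ j, Pmat N M i j * x j = 0 := by
    intro i hi hiN
    apply Finset.sum_eq_zero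
    intro j _
    have c1 : ¬((i : ℕ) < M ∧ i = j) := fun h => hi h.1
    have c2 : ¬((i : ℕ) < M ∧ (j : ℕ) = N) := fun h => hi h.1
    have c3 : ¬((j : ℕ) < M ∧ (i : ℕ) = N) := fun h => hiN h.2
    have c4 : ¬((i : ℕ) = N ∧ (j : ℕ) = N) := fun h => hiN h.1
    simp [Pmat, if_neg c1, if_neg c2, if_neg c3, if_neg c4]
  have hrow_last :
      ∑ j, Pmat N M (Fin.last N) j * x j =
        (M : ℝ) * x (Fin.last N)
          - ∑ j : Fin (N + 1), (if (j : ℕ) < M then x j else 0) := by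
    have hpt : ∀ j : Fin (N + 1), Pmat N M (Fin.last N) j * x j =
        -(if (j : ℕ) < M then x j else 0)
          + (if j = Fin.last N then (M : ℝ) * x j else 0) := by
      intro j
      have c1 : ¬(((Fin.last N : Fin (N + 1)) : ℕ) < M ∧ (Fin.last N : Fin (N+1)) = j) :=
        fun h => hNM (hlast ▸ h.1)
      have c2 : ¬(((Fin.last N : Fin (N + 1)) : ℕ) < M ∧ (j : ℕ) = N) :=
        fun h => hNM (hlast ▸ h.1)
      simp only [Pmat, Matrix.of_apply, if_neg c1, if_neg c2, hlast, Fin.ext_iff]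
      simp only [hlast, and_true, eq_self_iff_true, true_and]
      split_ifs <;> first | ring1 | (exfalso; omega)
    rw [Finset.sum_congr rfl fun j _ => hpt j, Finset.sum_add_distrib]
    simp [Finset.sum_ite_eq']
    ring
  rw [Fin.sum_univ_castSucc (f := fun i => x i * ∑ j, Pmat N M i j * x j)]
  have h1 : ∀ i : Fin N,
      x i.castSucc * ∑ j, Pmat N M i.castSucc j * x j =
        if (i : ℕ) < M then
          x i.castSucc * (x i.castSucc - x (Fin.last N)) else 0 := by
    intro i
    by_cases h : (i : ℕ) < M
    · rw [if_pos h, hrow_lt _ (by simpa using h)]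
    · rw [if_neg h, hrow_mid _ (by simpa using h) (by simp; omega), mul_zero]
  rw [Finset.sum_congr rfl fun i _ => h1 i, hrow_last]
  have h2 : ∑ j : Fin (N + 1), (if (j : ℕ) < M then x j else 0) =
      ∑ j : Fin N, (if (j : ℕ) < M then x j.castSucc else 0) := by
    rw [Fin.sum_univ_castSucc (f := fun j : Fin (N+1) => if (j : ℕ) < M then x j else 0)]
    simp [hlast, hNM]
  rw [h2, ← count_aux (N := N) hMN (x (Fin.last N)), ← Finset.sum_sub_distrib,
    Finset.mul_sum, ← Finset.sum_add_distrib]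
  apply Finset.sum_congr rfl
  intro i _
  split_ifs with h
  · ring
  · simp
section HbarSec
variable {N M M₁ : ℕ}

lemma E1 (hM₁M : M₁ < M) (hMN : M ≤ N) (L : Matrix (Fin N) (Fin N) ℝ)
    (y : Fin (N + 1) → ℝ) (z : Fin M → ℝ) (i j : Fin N) :
    Hbar N M M₁ hM₁M L y z i.castSucc.castSucc j.castSucc.castSucc
      = Hmat N M L y z i.castSucc j.castSucc := by
  have hi := i.isLt
  have hj := j.isLt
  simp only [Hbar, Hmat, Matrix.of_apply, Fin.coe_castSucc, dif_pos hi, dif_pos hj]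
  rcases eq_or_ne i j with rfl | hne
  · simp
    exact congrArg y (Fin.ext rfl)
  · have h1 : ¬ (i.castSucc.castSucc : Fin (N+2)) = j.castSucc.castSucc := by
      simp [Fin.ext_iff]; exact fun h => hne (Fin.ext h)
    have h2 : ¬ (i.castSucc : Fin (N+1)) = j.castSucc := by
      simp [Fin.ext_iff]; exact fun h => hne (Fin.ext h)
    rw [if_neg h1, if_neg h2]

end HbarSec
section HbarSec2
variable {N M M₁ : ℕ}

lemma E234 (hM₁M : M₁ < M) (hMN : M ≤ N) (L : Matrix (Fin N) (Fin N) ℝ)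
    (y : Fin (N + 1) → ℝ) (z : Fin M → ℝ) (i : Fin N) (c : ℝ) :
    Hbar N M M₁ hM₁M L y z i.castSucc.castSucc ((Fin.last N).castSucc) * c
      + Hbar N M M₁ hM₁M L y z i.castSucc.castSucc (Fin.last (N + 1)) * c
      = Hmat N M L y z i.castSucc (Fin.last N) * c := by
  have hi := i.isLt
  have hN : ¬ (N < N) := lt_irrefl N
  have hN1 : ¬ (N + 1 < N) := by omega
  have hN1' : ¬ ((N : ℕ) + 1 = N) := by omega
  have hNl : ¬ ((Fin.last N : Fin (N + 1)) : ℕ) < N := by simp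
  simp only [Hbar, Hmat, Matrix.of_apply, Fin.coe_castSucc, Fin.val_last,
    dif_pos hi, dif_neg hN, dif_neg hN1, dif_neg hNl, if_pos rfl, if_neg hN1']
  split_ifs <;> first | ring1 | (exfalso; omega)

lemma rowlast_comb (hM₁M : M₁ < M) (hMN : M ≤ N) (L : Matrix (Fin N) (Fin N) ℝ)
    (y : Fin (N + 1) → ℝ) (z : Fin M → ℝ) (j : Fin N) :
    Hbar N M M₁ hM₁M L y z ((Fin.last N).castSucc) j.castSucc.castSucc
      + Hbar N M M₁ hM₁M L y z (Fin.last (N + 1)) j.castSucc.castSucc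
      = Hmat N M L y z (Fin.last N) j.castSucc := by
  have hj := j.isLt
  have hN : ¬ (N < N) := lt_irrefl N
  have hN1 : ¬ (N + 1 < N) := by omega
  have hN1' : ¬ ((N : ℕ) + 1 = N) := by omega
  have hNl : ¬ ((Fin.last N : Fin (N + 1)) : ℕ) < N := by simp
  simp only [Hbar, Hmat, Matrix.of_apply, Fin.coe_castSucc, Fin.val_last,
    dif_pos hj, dif_neg hN, dif_neg hN1, dif_neg hNl, if_pos rfl, if_neg hN1']
  split_ifs <;> first | ring1 | (exfalso; omega)

lemma rowlast_corner (hM₁M : M₁ < M) (hMN : M ≤ N) (L : Matrix (Fin N) (Fin N) ℝ)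
    (y : Fin (N + 1) → ℝ) (z : Fin M → ℝ) (c : ℝ) :
    (Hbar N M M₁ hM₁M L y z ((Fin.last N).castSucc) ((Fin.last N).castSucc)
      + Hbar N M M₁ hM₁M L y z ((Fin.last N).castSucc) (Fin.last (N + 1))
      + Hbar N M M₁ hM₁M L y z (Fin.last (N + 1)) ((Fin.last N).castSucc)
      + Hbar N M M₁ hM₁M L y z (Fin.last (N + 1)) (Fin.last (N + 1))) * c
      = Hmat N M L y z (Fin.last N) (Fin.last N) * c := by
  have hN : ¬ (N < N) := lt_irrefl N
  have hN1 : ¬ (N + 1 < N) := by omega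
  have hN1' : ¬ ((N : ℕ) + 1 = N) := by omega
  have hNl : ¬ ((Fin.last N : Fin (N + 1)) : ℕ) < N := by simp
  simp only [Hbar, Hmat, Matrix.of_apply, Fin.coe_castSucc, Fin.val_last,
    dif_neg hN, dif_neg hN1, dif_neg hNl, if_pos rfl, if_neg hN1', dif_pos rfl]
  split_ifs <;> first | ring1 | (exfalso; omega)

end HbarSec2
lemma Hbar_quadform {N M M₁ : ℕ} (hM₁M : M₁ < M) (hMN : M ≤ N)
    (L : Matrix (Fin N) (Fin N) ℝ) (y : Fin (N + 1) → ℝ) (z : Fin M → ℝ)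
    (x : Fin (N + 1) → ℝ) (x' : Fin (N + 2) → ℝ)
    (hx' : ∀ i : Fin (N + 2), x' i =
      if h : (i : ℕ) < N then x ⟨i, by omega⟩ else x (Fin.last N)) :
    ∑ i, x' i * ∑ j, Hbar N M M₁ hM₁M L y z i j * x' j
      = ∑ i, x i * ∑ j, Hmat N M L y z i j * x j := by
  have hsplit2 : ∀ G : Fin (N + 2) → ℝ,
      ∑ i, G i = (∑ i : Fin N, G i.castSucc.castSucc)
        + G ((Fin.last N).castSucc) + G (Fin.last (N + 1)) := by
    intro G
    rw [Fin.sum_univ_castSucc (f := G),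
      Fin.sum_univ_castSucc (f := fun i : Fin (N + 1) => G i.castSucc)]
  have hsplit1 : ∀ G : Fin (N + 1) → ℝ,
      ∑ i, G i = (∑ i : Fin N, G i.castSucc) + G (Fin.last N) :=
    fun G => Fin.sum_univ_castSucc (f := G)
  have hx'c : ∀ i : Fin N, x' i.castSucc.castSucc = x i.castSucc := by
    intro i
    rw [hx', dif_pos (show ((i.castSucc.castSucc : Fin (N + 2)) : ℕ) < N by simp)]
    exact congrArg x (Fin.ext rfl)
  have hx'a : x' ((Fin.last N).castSucc) = x (Fin.last N) := by
    rw [hx', dif_neg (by simp)]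
  have hx'b : x' (Fin.last (N + 1)) = x (Fin.last N) := by
    rw [hx', dif_neg (by rw [Fin.val_last]; omega)]
  have inner1 : ∀ i : Fin N,
      ∑ j, Hbar N M M₁ hM₁M L y z i.castSucc.castSucc j * x' j
        = ∑ j, Hmat N M L y z i.castSucc j * x j := by
    intro i
    rw [hsplit2 (fun j => Hbar N M M₁ hM₁M L y z i.castSucc.castSucc j * x' j),
      hsplit1 (fun j => Hmat N M L y z i.castSucc j * x j)]
    have hsum : (∑ j : Fin N,
        Hbar N M M₁ hM₁M L y z i.castSucc.castSucc j.castSucc.castSucc * x' j.castSucc.castSucc)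
        = ∑ j : Fin N, Hmat N M L y z i.castSucc j.castSucc * x j.castSucc :=
      Finset.sum_congr rfl fun j _ => by rw [E1 hM₁M hMN, hx'c]
    rw [hx'a, hx'b, add_assoc, hsum, E234 hM₁M hMN L y z i (x (Fin.last N))]
  have hlastrows :
      x' ((Fin.last N).castSucc)
          * (∑ j, Hbar N M M₁ hM₁M L y z ((Fin.last N).castSucc) j * x' j)
        + x' (Fin.last (N + 1))
          * (∑ j, Hbar N M M₁ hM₁M L y z (Fin.last (N + 1)) j * x' j)
        = x (Fin.last N) * ∑ j, Hmat N M L y z (Fin.last N) j * x j := by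
    rw [hsplit2 (fun j => Hbar N M M₁ hM₁M L y z ((Fin.last N).castSucc) j * x' j),
      hsplit2 (fun j => Hbar N M M₁ hM₁M L y z (Fin.last (N + 1)) j * x' j),
      hsplit1 (fun j => Hmat N M L y z (Fin.last N) j * x j), hx'a, hx'b]
    have hsum : (∑ j : Fin N,
          Hbar N M M₁ hM₁M L y z ((Fin.last N).castSucc) j.castSucc.castSucc * x' j.castSucc.castSucc)
        + (∑ j : Fin N,
          Hbar N M M₁ hM₁M L y z (Fin.last (N + 1)) j.castSucc.castSucc * x' j.castSucc.castSucc)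
        = ∑ j : Fin N, Hmat N M L y z (Fin.last N) j.castSucc * x j.castSucc := by
      rw [← Finset.sum_add_distrib]
      exact Finset.sum_congr rfl fun j _ => by
        rw [hx'c, ← add_mul, rowlast_comb hM₁M hMN]
    have hcorner := rowlast_corner hM₁M hMN L y z (x (Fin.last N) * x (Fin.last N))
    linear_combination x (Fin.last N) * hsum + hcorner
  rw [hsplit2 (fun i => x' i * ∑ j, Hbar N M M₁ hM₁M L y z i j * x' j),
    hsplit1 (fun i => x i * ∑ j, Hmat N M L y z i j * x j)]
  have hterm : ∀ i : Fin N,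
      x' i.castSucc.castSucc * ∑ j, Hbar N M M₁ hM₁M L y z i.castSucc.castSucc j * x' j
        = x i.castSucc * ∑ j, Hmat N M L y z i.castSucc j * x j := by
    intro i; rw [hx'c, inner1]
  rw [Finset.sum_congr rfl fun i _ => hterm i, add_assoc, hlastrows]

/-- the feasible sets of the three duals are nested
(`H̄(y,z) ⪰ 0 → H(y,z) ⪰ 0` and `H(y,z) ⪰ 0 → H̃(y,z) ⪰ 0`); consequently, if
`S̄ = {(y,z) : H̄(y,z) ⪰ 0}` is nonempty and `F` is bounded below on
`S̃ = {(y,z) : H̃(y,z) ⪰ 0}`, then `inf_{S̃} F ≤ inf_S F ≤ inf_{S̄} F` where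
`S = {(y,z) : H(y,z) ⪰ 0}`. -/
theorem feasible_sets_nested_and_inf_ordered (N M M₁ : ℕ)
    (hM₁ : 1 ≤ M₁) (hM₁M : M₁ < M) (hMN : M ≤ N)
    (L : Matrix (Fin N) (Fin N) ℝ) (hL : L.IsSymm)
    (b : Fin M → ℝ) (φ : ℝ) (hφ : 0 ≤ φ) :
    (∀ (y : Fin (N + 1) → ℝ) (z : Fin M → ℝ),
      (Hbar N M M₁ hM₁M L y z).PosSemidef → (Hmat N M L y z).PosSemidef) ∧
    (∀ (y : Fin (N + 1) → ℝ) (z : Fin M → ℝ),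
      (Hmat N M L y z).PosSemidef → (Hmat N M L y z + φ • Pmat N M).PosSemidef) ∧
    (({p : (Fin (N + 1) → ℝ) × (Fin M → ℝ) |
          (Hbar N M M₁ hM₁M L p.1 p.2).PosSemidef}).Nonempty →
      BddBelow (Fobj N M b '' {p : (Fin (N + 1) → ℝ) × (Fin M → ℝ) |
          (Hmat N M L p.1 p.2 + φ • Pmat N M).PosSemidef}) →
      sInf (Fobj N M b '' {p : (Fin (N + 1) → ℝ) × (Fin M → ℝ) |
            (Hmat N M L p.1 p.2 + φ • Pmat N M).PosSemidef})
          ≤ sInf (Fobj N M b '' {p : (Fin (N + 1) → ℝ) × (Fin M → ℝ) |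
            (Hmat N M L p.1 p.2).PosSemidef}) ∧
        sInf (Fobj N M b '' {p : (Fin (N + 1) → ℝ) × (Fin M → ℝ) |
            (Hmat N M L p.1 p.2).PosSemidef})
          ≤ sInf (Fobj N M b '' {p : (Fin (N + 1) → ℝ) × (Fin M → ℝ) |
            (Hbar N M M₁ hM₁M L p.1 p.2).PosSemidef})) := by
  have part1 : ∀ (y : Fin (N + 1) → ℝ) (z : Fin M → ℝ),
      (Hbar N M M₁ hM₁M L y z).PosSemidef → (Hmat N M L y z).PosSemidef := by
    intro y z hb
    refine PosSemidef.of_dotProduct_mulVec_nonneg (isHermitian_of_symm' (Hmat_symm L hL y z)) fun x => ?_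
    have h0 := hb.dotProduct_mulVec_nonneg (fun i : Fin (N + 2) =>
      if h : (i : ℕ) < N then x ⟨i, by omega⟩ else x (Fin.last N))
    rw [quadform_expand] at h0 ⊢
    rw [← Hbar_quadform hM₁M hMN L y z x _ (fun i => rfl)]
    simpa using h0
  have part2 : ∀ (y : Fin (N + 1) → ℝ) (z : Fin M → ℝ),
      (Hmat N M L y z).PosSemidef → (Hmat N M L y z + φ • Pmat N M).PosSemidef := by
    intro y z hm
    refine PosSemidef.of_dotProduct_mulVec_nonneg ?_ ?_
    · apply isHermitian_of_symm'
      intro i j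
      simp only [Matrix.add_apply, Matrix.smul_apply]
      rw [Hmat_symm L hL y z i j, Pmat_symm i j]
    · intro x
      have h1 := hm.dotProduct_mulVec_nonneg x
      have expand : dotProduct (star x) ((Hmat N M L y z + φ • Pmat N M) *ᵥ x)
          = dotProduct (star x) (Hmat N M L y z *ᵥ x)
            + φ * dotProduct (star x) (Pmat N M *ᵥ x) := by
        rw [Matrix.add_mulVec, dotProduct_add, Matrix.smul_mulVec,
          dotProduct_smul, smul_eq_mul]
      rw [expand]
      have h2 : 0 ≤ dotProduct (star x) (Pmat N M *ᵥ x) := by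
        rw [quadform_expand, Pmat_quadform hMN]
        apply Finset.sum_nonneg
        intro i _
        split_ifs
        · positivity
        · exact le_rfl
      exact add_nonneg h1 (mul_nonneg hφ h2)
  refine ⟨part1, part2, ?_⟩
  intro hne hbdd
  have hsub1 : {p : (Fin (N + 1) → ℝ) × (Fin M → ℝ) |
        (Hbar N M M₁ hM₁M L p.1 p.2).PosSemidef}
      ⊆ {p : (Fin (N + 1) → ℝ) × (Fin M → ℝ) | (Hmat N M L p.1 p.2).PosSemidef} :=
    fun p hp => part1 p.1 p.2 hp
  have hsub2 : {p : (Fin (N + 1) → ℝ) × (Fin M → ℝ) | (Hmat N M L p.1 p.2).PosSemidef}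
      ⊆ {p : (Fin (N + 1) → ℝ) × (Fin M → ℝ) |
        (Hmat N M L p.1 p.2 + φ • Pmat N M).PosSemidef} :=
    fun p hp => part2 p.1 p.2 hp
  constructor
  · exact csInf_le_csInf hbdd ((hne.mono hsub1).image _) (Set.image_mono hsub2)
  · exact csInf_le_csInf (hbdd.mono (Set.image_mono hsub2)) (hne.image _)
      (Set.image_mono hsub1)
end

section
/- With F, S, S̄, S̃ as defined, assume S̄ is nonempty and F is bounded below on S̃. Writing F* = inf_S F, F̄* = inf_{S̄} F and F̃* = inf_{S̃} F, the approximation error of the modified dual relative to the original dual is bounded as |F̄* − F*| ≤ |F̄* − F̃*|. -/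
open Matrix

open Finset


section Aux
variable {N M : ℕ}

lemma sum_split2 (f : Fin (N+2) → ℝ) :
    ∑ k, f k = (∑ k : Fin N, f ⟨k, by omega⟩) + f ⟨N, by omega⟩ + f ⟨N+1, by omega⟩ := by
  rw [Fin.sum_univ_castSucc, Fin.sum_univ_castSucc]; rfl

lemma sum_split1 (f : Fin (N+1) → ℝ) :
    ∑ k, f k = (∑ k : Fin N, f ⟨k, by omega⟩) + f ⟨N, by omega⟩ := by
  rw [Fin.sum_univ_castSucc]; rfl

variable (L : Matrix (Fin N) (Fin N) ℝ) (y : Fin (N+1) → ℝ) (z : Fin M → ℝ)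

-- entry lemmas for Hmat
lemma Hmat_ll (i j : Fin N) :
    Hmat N M L y z ⟨i, by omega⟩ ⟨j, by omega⟩ = (if i = j then y ⟨i, by omega⟩ else 0) + L i j := by
  simp only [Hmat, of_apply]
  rw [dif_pos (show (i:ℕ) < N from i.isLt), dif_pos (show (j:ℕ) < N from j.isLt)]
  simp [Fin.ext_iff]

lemma Hmat_lN (i : Fin N) :
    Hmat N M L y z ⟨i, by omega⟩ ⟨N, by omega⟩ = if h : (i:ℕ) < M then z ⟨i, h⟩ else 0 := by
  simp only [Hmat, of_apply]
  rw [dif_pos (show (i:ℕ) < N from i.isLt), dif_neg (by simp)]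

lemma Hmat_Nl (j : Fin N) :
    Hmat N M L y z ⟨N, by omega⟩ ⟨j, by omega⟩ = if h : (j:ℕ) < M then z ⟨j, h⟩ else 0 := by
  simp only [Hmat, of_apply]
  rw [dif_neg (by simp), dif_pos (show (j:ℕ) < N from j.isLt)]

lemma Hmat_NN : Hmat N M L y z ⟨N, by omega⟩ ⟨N, by omega⟩ = y ⟨N, by omega⟩ := by
  simp only [Hmat, of_apply]
  rw [dif_neg (by simp), dif_neg (by simp)]

end Aux

section AuxBar
variable {N M M₁ : ℕ}
variable (hM₁M : M₁ < M) (L : Matrix (Fin N) (Fin N) ℝ)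
  (y : Fin (N+1) → ℝ) (z : Fin M → ℝ)

-- entry lemmas for Hbar
lemma Hbar_ll (i j : Fin N) :
    Hbar N M M₁ hM₁M L y z ⟨i, by omega⟩ ⟨j, by omega⟩
      = (if i = j then y ⟨i, by omega⟩ else 0) + L i j := by
  simp only [Hbar, of_apply]
  rw [dif_pos (show (i:ℕ) < N from i.isLt), dif_pos (show (j:ℕ) < N from j.isLt)]
  simp [Fin.ext_iff]

lemma Hbar_lN (i : Fin N) :
    Hbar N M M₁ hM₁M L y z ⟨i, by omega⟩ ⟨N, by omega⟩
      = if h : (i:ℕ) < M₁ then z ⟨i, by omega⟩ else 0 := by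
  simp only [Hbar, of_apply]
  split_ifs <;> first | rfl | omega

lemma Hbar_lN1 (i : Fin N) :
    Hbar N M M₁ hM₁M L y z ⟨i, by omega⟩ ⟨N+1, by omega⟩
      = if h : M₁ ≤ (i:ℕ) ∧ (i:ℕ) < M then z ⟨i, h.2⟩ else 0 := by
  simp only [Hbar, of_apply]
  split_ifs <;> first | rfl | omega

lemma Hbar_Nl (j : Fin N) :
    Hbar N M M₁ hM₁M L y z ⟨N, by omega⟩ ⟨j, by omega⟩
      = if h : (j:ℕ) < M₁ then z ⟨j, by omega⟩ else 0 := by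
  simp only [Hbar, of_apply]
  split_ifs <;> first | rfl | omega

lemma Hbar_N1l (j : Fin N) :
    Hbar N M M₁ hM₁M L y z ⟨N+1, by omega⟩ ⟨j, by omega⟩
      = if h : M₁ ≤ (j:ℕ) ∧ (j:ℕ) < M then z ⟨j, h.2⟩ else 0 := by
  simp only [Hbar, of_apply]
  split_ifs <;> first | rfl | omega

lemma Hbar_NN :
    Hbar N M M₁ hM₁M L y z ⟨N, by omega⟩ ⟨N, by omega⟩
      = -(∑ k : Fin M, if (k : ℕ) < M₁ then z k else 0) := by
  simp only [Hbar, of_apply]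
  split_ifs <;> first | rfl | omega

lemma Hbar_NN1 :
    Hbar N M M₁ hM₁M L y z ⟨N, by omega⟩ ⟨N+1, by omega⟩ = 0 := by
  simp only [Hbar, of_apply]
  split_ifs <;> first | rfl | omega

lemma Hbar_N1N :
    Hbar N M M₁ hM₁M L y z ⟨N+1, by omega⟩ ⟨N, by omega⟩ = 0 := by
  simp only [Hbar, of_apply]
  split_ifs <;> first | rfl | omega

lemma Hbar_N1N1 :
    Hbar N M M₁ hM₁M L y z ⟨N+1, by omega⟩ ⟨N+1, by omega⟩
      = y (Fin.last N) + ∑ k : Fin M, if (k : ℕ) < M₁ then z k else 0 := by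
  simp only [Hbar, of_apply]
  split_ifs <;> first | rfl | omega

end AuxBar
section Herm
variable {N M : ℕ}

lemma Hmat_herm (L : Matrix (Fin N) (Fin N) ℝ) (y : Fin (N+1) → ℝ) (z : Fin M → ℝ)
    (hL : L.IsSymm) : (Hmat N M L y z).IsHermitian := by
  ext i j
  rw [conjTranspose_apply, star_trivial]
  simp only [Hmat, of_apply]
  by_cases hi : (i:ℕ) < N <;> by_cases hj : (j:ℕ) < N <;>
      simp only [hi, hj, dif_pos, dif_neg, not_false_iff, dite_true, dite_false] <;>
      try rfl
  · by_cases hij : i = j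
    · subst hij; rfl
    · rw [if_neg (Ne.symm hij), if_neg hij]
      congr 1
      exact hL.apply _ _
  · have : i = j := Fin.ext (by omega)
    rw [this]

lemma Pmat_herm : (Pmat N M).IsHermitian := by
  ext i j
  rw [conjTranspose_apply, star_trivial]
  simp only [Pmat, of_apply]
  split_ifs <;> first
    | rfl
    | (exfalso; (simp [Fin.ext_iff, Fin.val_mk] at *) <;> omega)

lemma card_lt_M (hMN : M ≤ N) : ∑ j : Fin (N+1), (if (j:ℕ) < M then (1:ℝ) else 0) = M := by
  rw [Fin.sum_univ_eq_sum_range (fun j => if j < M then (1:ℝ) else 0), ← Finset.sum_filter]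
  have : (Finset.range (N+1)).filter (· < M) = Finset.range M := by
    ext a; simp; omega
  rw [this]
  simp

lemma Pmat_quad_nonneg (hMN : M ≤ N) (x : Fin (N+1) → ℝ) :
    0 ≤ x ⬝ᵥ (Pmat N M *ᵥ x) := by
  have hx : ∀ (w : Fin (N+1)), (w:ℕ) = N → x w = x ⟨N, by omega⟩ := fun w hw => by
    rw [show w = (⟨N, by omega⟩ : Fin (N+1)) from Fin.ext hw]
  have hrow : ∀ i : Fin (N+1), (Pmat N M *ᵥ x) i
      = (if (i:ℕ) < M then x i - x ⟨N, by omega⟩ else 0)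
        + (if i = ⟨N, by omega⟩ then (M:ℝ) * x ⟨N, by omega⟩
            - (∑ j : Fin (N+1), (if (j:ℕ) < M then x j else 0)) else 0) := by
    intro i
    rw [mulVec, dotProduct]
    by_cases hi : (i:ℕ) < M
    · have hiN : ¬ i = (⟨N, by omega⟩ : Fin (N+1)) := by
        simp only [Fin.ext_iff]; omega
      have he : ∀ j : Fin (N+1), Pmat N M i j * x j
          = (if j = i then x i else 0) + (if j = ⟨N, by omega⟩ then -(x ⟨N, by omega⟩) else 0) := by
        intro j
        simp only [Pmat, of_apply]
        split_ifs <;> subst_vars <;>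
          (try rw [hx j (by simp only [Fin.ext_iff, Fin.val_mk] at *; omega)]) <;>
          (first
            | (exfalso; (simp [Fin.ext_iff, Fin.val_mk] at *) <;> omega)
            | ring)
      rw [Finset.sum_congr rfl fun j _ => he j, Finset.sum_add_distrib,
        Finset.sum_ite_eq' Finset.univ i, Finset.sum_ite_eq' Finset.univ]
      simp [hi, hiN]
      ring
    · by_cases hiN : (i:ℕ) = N
      · have hiN' : i = (⟨N, by omega⟩ : Fin (N+1)) := Fin.ext hiN
        have he : ∀ j : Fin (N+1), Pmat N M i j * x j
            = (if (j:ℕ) < M then -(x j) else 0)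
              + (if j = ⟨N, by omega⟩ then (M:ℝ) * x ⟨N, by omega⟩ else 0) := by
          intro j
          simp only [Pmat, of_apply]
          split_ifs <;> subst_vars <;>
          (try rw [hx j (by simp only [Fin.ext_iff, Fin.val_mk] at *; omega)]) <;>
          (first
            | (exfalso; (simp [Fin.ext_iff, Fin.val_mk] at *) <;> omega)
            | ring)
        rw [Finset.sum_congr rfl fun j _ => he j, Finset.sum_add_distrib,
          Finset.sum_ite_eq' Finset.univ]
        have hneg : ∑ j : Fin (N+1), (if (j:ℕ) < M then -(x j) else 0)
            = -∑ j : Fin (N+1), (if (j:ℕ) < M then x j else 0) := by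
          rw [← Finset.sum_neg_distrib]
          exact Finset.sum_congr rfl fun j _ => by split_ifs <;> simp
        rw [hneg]
        simp [hi, hiN']
        ring
      · have he : ∀ j : Fin (N+1), Pmat N M i j * x j = 0 := by
          intro j
          simp only [Pmat, of_apply]
          split_ifs <;> subst_vars <;>
          (first
            | (exfalso; (simp [Fin.ext_iff, Fin.val_mk] at *) <;> omega)
            | ring)
        rw [Finset.sum_congr rfl fun j _ => he j]
        have : ¬ i = (⟨N, by omega⟩ : Fin (N+1)) := by
          simp only [Fin.ext_iff]; omega
        simp [hi, this]
  have key : x ⬝ᵥ (Pmat N M *ᵥ x)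
      = ∑ i : Fin (N+1), (if (i:ℕ) < M then (x i - x ⟨N, by omega⟩)^2 else 0) := by
    rw [dotProduct]
    rw [Finset.sum_congr rfl fun i _ => by rw [hrow i]]
    have expand : ∀ i : Fin (N+1), x i * ((if (i:ℕ) < M then x i - x ⟨N, by omega⟩ else 0)
        + (if i = ⟨N, by omega⟩ then (M:ℝ) * x ⟨N, by omega⟩
            - (∑ j : Fin (N+1), (if (j:ℕ) < M then x j else 0)) else 0))
        = (if (i:ℕ) < M then x i * (x i - x ⟨N, by omega⟩) else 0)
          + (if i = ⟨N, by omega⟩ then x ⟨N, by omega⟩ * ((M:ℝ) * x ⟨N, by omega⟩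
              - (∑ j : Fin (N+1), (if (j:ℕ) < M then x j else 0))) else 0) := by
      intro i
      by_cases hi : (i:ℕ) < M
      · have : ¬ i = (⟨N, by omega⟩ : Fin (N+1)) := by
          simp only [Fin.ext_iff]; omega
        simp [hi, this]
      · by_cases hiN : i = (⟨N, by omega⟩ : Fin (N+1))
        · rw [hiN]
          have hc : ¬ ((⟨N, by omega⟩ : Fin (N+1)) : ℕ) < M := by simp; omega
          simp [hc]
          try ring
        · simp [hi, hiN]
    rw [Finset.sum_congr rfl fun i _ => expand i, Finset.sum_add_distrib,
      Finset.sum_ite_eq' Finset.univ]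
    simp only [Finset.mem_univ, if_pos]
    have expand2 : ∀ i : Fin (N+1), (if (i:ℕ) < M then (x i - x ⟨N, by omega⟩)^2 else 0)
        = (if (i:ℕ) < M then x i * (x i - x ⟨N, by omega⟩) else 0)
          + (x ⟨N, by omega⟩ * x ⟨N, by omega⟩ * (if (i:ℕ) < M then (1:ℝ) else 0)
            - x ⟨N, by omega⟩ * (if (i:ℕ) < M then x i else 0)) := by
      intro i; split_ifs <;> ring
    rw [Finset.sum_congr rfl fun i _ => expand2 i, Finset.sum_add_distrib,
      Finset.sum_sub_distrib, ← Finset.mul_sum, ← Finset.mul_sum, card_lt_M hMN]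
    ring
  rw [key]
  exact Finset.sum_nonneg fun i _ => by positivity
end Herm
section Quad
variable {N M M₁ : ℕ}

lemma quad (hM₁M : M₁ < M) (hMN : M ≤ N)
    (L : Matrix (Fin N) (Fin N) ℝ) (y : Fin (N+1) → ℝ) (z : Fin M → ℝ)
    (xb : Fin (N+2) → ℝ) (x : Fin (N+1) → ℝ)
    (h1 : ∀ i : Fin N, xb ⟨i, by omega⟩ = x ⟨i, by omega⟩)
    (h2 : xb ⟨N, by omega⟩ = x ⟨N, by omega⟩)
    (h3 : xb ⟨N+1, by omega⟩ = x ⟨N, by omega⟩) :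
    xb ⬝ᵥ (Hbar N M M₁ hM₁M L y z *ᵥ xb) = x ⬝ᵥ (Hmat N M L y z *ᵥ x) := by
  have hlast : (Fin.last N : Fin (N+1)) = ⟨N, by omega⟩ := rfl
  have habc : ∀ i : Fin N,
      (if h : (i:ℕ) < M₁ then z ⟨i, by omega⟩ else 0)
        + (if h : M₁ ≤ (i:ℕ) ∧ (i:ℕ) < M then z ⟨i, h.2⟩ else 0)
      = (if h : (i:ℕ) < M then z ⟨i, h⟩ else 0) := by
    intro i; split_ifs <;> first | (exfalso; omega) | simp
  simp only [dotProduct, mulVec, dotProduct]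
  simp only [sum_split2, sum_split1]
  simp only [h1, h2, h3, Hbar_ll, Hbar_lN, Hbar_lN1, Hbar_Nl, Hbar_N1l, Hbar_NN,
    Hbar_NN1, Hbar_N1N, Hbar_N1N1, Hmat_ll, Hmat_lN, Hmat_Nl, Hmat_NN, hlast]
  have e1 : (∑ i : Fin N, x ⟨(i:ℕ), by omega⟩ *
        ((∑ j : Fin N, ((if i = j then y ⟨(i:ℕ), by omega⟩ else 0) + L i j) * x ⟨(j:ℕ), by omega⟩)
          + (if h : (i:ℕ) < M₁ then z ⟨(i:ℕ), by omega⟩ else 0) * x ⟨N, by omega⟩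
          + (if h : M₁ ≤ (i:ℕ) ∧ (i:ℕ) < M then z ⟨(i:ℕ), h.2⟩ else 0) * x ⟨N, by omega⟩))
      = ∑ i : Fin N, x ⟨(i:ℕ), by omega⟩ *
        ((∑ j : Fin N, ((if i = j then y ⟨(i:ℕ), by omega⟩ else 0) + L i j) * x ⟨(j:ℕ), by omega⟩)
          + (if h : (i:ℕ) < M then z ⟨(i:ℕ), h⟩ else 0) * x ⟨N, by omega⟩) :=
    Finset.sum_congr rfl fun i _ => by rw [← habc i]; ring
  have e2 : (∑ i : Fin N, (if h : (i:ℕ) < M₁ then z ⟨(i:ℕ), by omega⟩ else 0) * x ⟨(i:ℕ), by omega⟩)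
      + (∑ i : Fin N, (if h : M₁ ≤ (i:ℕ) ∧ (i:ℕ) < M then z ⟨(i:ℕ), h.2⟩ else 0) * x ⟨(i:ℕ), by omega⟩)
      = ∑ i : Fin N, (if h : (i:ℕ) < M then z ⟨(i:ℕ), h⟩ else 0) * x ⟨(i:ℕ), by omega⟩ := by
    rw [← Finset.sum_add_distrib]
    exact Finset.sum_congr rfl fun i _ => by rw [← habc i]; ring
  rw [e1]
  linear_combination x ⟨N, by omega⟩ * e2
end Quad
/-- with `F* = inf_S F`, `F̄* = inf_{S̄} F`, `F̃* = inf_{S̃} F`, assuming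
`S̄` nonempty and `F` bounded below on `S̃`, the approximation error satisfies
`|F̄* − F*| ≤ |F̄* − F̃*|`. -/
theorem approximation_error_bound (N M M₁ : ℕ)
    (hM₁ : 1 ≤ M₁) (hM₁M : M₁ < M) (hMN : M ≤ N)
    (L : Matrix (Fin N) (Fin N) ℝ) (hL : L.IsSymm)
    (b : Fin M → ℝ) (φ : ℝ) (hφ : 0 ≤ φ)
    (hne : ({p : (Fin (N + 1) → ℝ) × (Fin M → ℝ) |
        (Hbar N M M₁ hM₁M L p.1 p.2).PosSemidef}).Nonempty)
    (hbdd : BddBelow (Fobj N M b '' {p : (Fin (N + 1) → ℝ) × (Fin M → ℝ) |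
        (Hmat N M L p.1 p.2 + φ • Pmat N M).PosSemidef})) :
    |sInf (Fobj N M b '' {p : (Fin (N + 1) → ℝ) × (Fin M → ℝ) |
          (Hbar N M M₁ hM₁M L p.1 p.2).PosSemidef})
        - sInf (Fobj N M b '' {p : (Fin (N + 1) → ℝ) × (Fin M → ℝ) |
          (Hmat N M L p.1 p.2).PosSemidef})|
      ≤ |sInf (Fobj N M b '' {p : (Fin (N + 1) → ℝ) × (Fin M → ℝ) |
          (Hbar N M M₁ hM₁M L p.1 p.2).PosSemidef})
        - sInf (Fobj N M b '' {p : (Fin (N + 1) → ℝ) × (Fin M → ℝ) |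
          (Hmat N M L p.1 p.2 + φ • Pmat N M).PosSemidef})| := by
  have hstar1 : ∀ (x : Fin (N+1) → ℝ), star x = x := fun x => funext fun i => star_trivial _
  have hstar2 : ∀ (x : Fin (N+2) → ℝ), star x = x := fun x => funext fun i => star_trivial _
  -- S̄ ⊆ S
  have h12 : {p : (Fin (N + 1) → ℝ) × (Fin M → ℝ) | (Hbar N M M₁ hM₁M L p.1 p.2).PosSemidef}
      ⊆ {p : (Fin (N + 1) → ℝ) × (Fin M → ℝ) | (Hmat N M L p.1 p.2).PosSemidef} := by
    rintro ⟨y, z⟩ hp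
    refine Matrix.PosSemidef.of_dotProduct_mulVec_nonneg (Hmat_herm L y z hL) fun x => ?_
    rw [hstar1]
    set xb : Fin (N+2) → ℝ := fun k => if h : (k:ℕ) < N then x ⟨k, by omega⟩ else x ⟨N, by omega⟩
      with hxb
    have hq := quad hM₁M hMN L y z xb x
      (fun i => by simp only [hxb]; rw [dif_pos i.isLt])
      (by simp only [hxb]; rw [dif_neg (by omega)])
      (by simp only [hxb]; rw [dif_neg (by omega)])
    rw [← hq]
    have := Matrix.PosSemidef.dotProduct_mulVec_nonneg hp xb
    rwa [hstar2] at this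
  -- S ⊆ S̃
  have h23 : {p : (Fin (N + 1) → ℝ) × (Fin M → ℝ) | (Hmat N M L p.1 p.2).PosSemidef}
      ⊆ {p : (Fin (N + 1) → ℝ) × (Fin M → ℝ) |
          (Hmat N M L p.1 p.2 + φ • Pmat N M).PosSemidef} := by
    rintro ⟨y, z⟩ hp
    have hPh : (φ • Pmat N M).IsHermitian := by
      show (φ • Pmat N M)ᴴ = _
      rw [conjTranspose_smul, star_trivial, Pmat_herm]
    refine Matrix.PosSemidef.of_dotProduct_mulVec_nonneg (hp.1.add hPh) fun x => ?_
    rw [hstar1, add_mulVec, dotProduct_add, smul_mulVec, dotProduct_smul]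
    have h1 := Matrix.PosSemidef.dotProduct_mulVec_nonneg hp x
    rw [hstar1] at h1
    have h2 := Pmat_quad_nonneg hMN x
    have : (0:ℝ) ≤ φ * (x ⬝ᵥ (Pmat N M *ᵥ x)) := mul_nonneg hφ h2
    simp only [smul_eq_mul]
    linarith
  -- images
  have himg12 := Set.image_mono (f := Fobj N M b) h12
  have himg23 := Set.image_mono (f := Fobj N M b) h23
  have hne1 := hne.image (Fobj N M b)
  have hne2 := hne1.mono himg12
  have hb2 := BddBelow.mono himg23 hbdd
  have i32 := csInf_le_csInf hbdd hne2 himg23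
  have i21 := csInf_le_csInf hb2 hne1 himg12
  rw [abs_of_nonneg (by linarith), abs_of_nonneg (by linarith)]
  linarith
end

section
/- (Graph Laplacian regularizer identity for H) For every v ∈ ℝ^{N+1}, vᵀ H v = ∑_{1 ≤ i < j ≤ N} W_{i,j} (v_i − v_j)² − ∑_{i=1}^{M} z_i (v_{N+1} − v_i)² + ∑_{i=1}^{N} u_i v_i² + u_{N+1} v_{N+1}², where the self-loop weights are u_i = y_i + z_i for 1 ≤ i ≤ M, u_i = y_i for M < i ≤ N, and u_{N+1} = y_{N+1} + ∑_{j=1}^{M} z_j. -/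
open Matrix

/-- The combinatorial graph Laplacian `L = D − W`, where `D` is the diagonal degree
matrix with `D_{ii} = ∑_j W_{ij}`. -/
def lapl (N : ℕ) (W : Matrix (Fin N) (Fin N) ℝ) : Matrix (Fin N) (Fin N) ℝ :=
  Matrix.of fun i j => (if i = j then ∑ k, W i k else 0) - W i j

lemma sum_eq_castLE {M N : ℕ} (hMN : M ≤ N) (F : Fin N → ℝ)
    (hF : ∀ i : Fin N, M ≤ (i : ℕ) → F i = 0) :
    ∑ i : Fin N, F i = ∑ i : Fin M, F (Fin.castLE hMN i) := by
  classical
  have : ∑ i : Fin M, F (Fin.castLE hMN i)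
      = ∑ x ∈ Finset.univ.map (Fin.castLEEmb hMN), F x := by
    rw [Finset.sum_map]; rfl
  rw [this]
  refine (Finset.sum_subset (Finset.subset_univ _) ?_).symm
  intro x _ hx
  refine hF x ?_
  by_contra h
  push_neg at h
  exact hx (Finset.mem_map.mpr ⟨⟨x, h⟩, Finset.mem_univ _, Fin.ext rfl⟩)

lemma lapl_quad (N : ℕ) (W : Matrix (Fin N) (Fin N) ℝ) (hW : W.IsSymm)
    (hWdiag : ∀ i, W i i = 0) (x : Fin N → ℝ) :
    x ⬝ᵥ (lapl N W).mulVec x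
      = ∑ i : Fin N, ∑ j : Fin N, if i < j then W i j * (x i - x j) ^ 2 else 0 := by
  have hsym : ∀ i j, W j i = W i j := fun i j => hW.apply i j
  have hswap : ∀ i j : Fin N, W j i * (x j - x i) ^ 2 = W i j * (x i - x j) ^ 2 := by
    intro i j; rw [hsym]; ring
  have hT2 : (∑ i : Fin N, ∑ j : Fin N, W i j * (x i - x j) ^ 2)
      = 2 * ∑ i : Fin N, ∑ j : Fin N, (if i < j then W i j * (x i - x j) ^ 2 else 0) := by
    have hpt : ∀ i j : Fin N, W i j * (x i - x j) ^ 2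
        = (if i < j then W i j * (x i - x j) ^ 2 else 0)
          + (if j < i then W i j * (x i - x j) ^ 2 else 0) := by
      intro i j
      rcases lt_trichotomy i j with hlt | heq | hgt
      · simp [hlt, not_lt_of_gt hlt]
      · subst heq; simp
      · simp [hgt, not_lt_of_gt hgt, asymm hgt]
    have h2 : (∑ i : Fin N, ∑ j : Fin N, if j < i then W i j * (x i - x j) ^ 2 else 0)
        = ∑ i : Fin N, ∑ j : Fin N, if i < j then W i j * (x i - x j) ^ 2 else 0 := by
      rw [Finset.sum_comm]
      refine Finset.sum_congr rfl fun i _ => Finset.sum_congr rfl fun j _ => ?_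
      by_cases hij : i < j <;> simp [hij, hswap]
    calc (∑ i : Fin N, ∑ j : Fin N, W i j * (x i - x j) ^ 2)
        = ∑ i : Fin N, ∑ j : Fin N, ((if i < j then W i j * (x i - x j) ^ 2 else 0)
          + (if j < i then W i j * (x i - x j) ^ 2 else 0)) := by
          exact Finset.sum_congr rfl fun i _ => Finset.sum_congr rfl fun j _ => hpt i j
      _ = _ := by simp_rw [Finset.sum_add_distrib]; rw [h2]; ring
  have e1 : x ⬝ᵥ (lapl N W).mulVec x
      = (∑ i : Fin N, (∑ k : Fin N, W i k) * x i ^ 2)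
        - ∑ i : Fin N, ∑ j : Fin N, W i j * x i * x j := by
    simp only [dotProduct, mulVec, lapl, Matrix.of_apply]
    rw [← Finset.sum_sub_distrib]
    refine Finset.sum_congr rfl fun i _ => ?_
    have hpt : ∀ j : Fin N, x i * (((if i = j then ∑ k, W i k else 0) - W i j) * x j)
        = (if i = j then (∑ k, W i k) * x i ^ 2 else 0) - W i j * x i * x j := by
      intro j; by_cases h : i = j
      · subst h; simp; ring
      · simp [h]; ring
    rw [Finset.mul_sum, Finset.sum_congr rfl fun j _ => hpt j, Finset.sum_sub_distrib,
      Finset.sum_ite_eq Finset.univ i (fun _ => (∑ k, W i k) * x i ^ 2)]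
    simp
  have hL2 : 2 * (x ⬝ᵥ (lapl N W).mulVec x)
      = ∑ i : Fin N, ∑ j : Fin N, W i j * (x i - x j) ^ 2 := by
    have hc : (∑ i : Fin N, ∑ j : Fin N, W i j * x j ^ 2)
        = ∑ i : Fin N, ∑ j : Fin N, W i j * x i ^ 2 := by
      rw [Finset.sum_comm]
      exact Finset.sum_congr rfl fun i _ => Finset.sum_congr rfl fun j _ => by rw [hsym]
    have hexp : (∑ i : Fin N, ∑ j : Fin N, W i j * (x i - x j) ^ 2)
        = (∑ i : Fin N, ∑ j : Fin N, W i j * x i ^ 2)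
          - 2 * (∑ i : Fin N, ∑ j : Fin N, W i j * x i * x j)
          + (∑ i : Fin N, ∑ j : Fin N, W i j * x j ^ 2) := by
      rw [Finset.mul_sum, ← Finset.sum_sub_distrib, ← Finset.sum_add_distrib]
      refine Finset.sum_congr rfl fun i _ => ?_
      rw [Finset.mul_sum, ← Finset.sum_sub_distrib, ← Finset.sum_add_distrib]
      exact Finset.sum_congr rfl fun j _ => by ring
    have hd : (∑ i : Fin N, ∑ j : Fin N, W i j * x i ^ 2)
        = ∑ i : Fin N, (∑ k : Fin N, W i k) * x i ^ 2 := by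
      exact Finset.sum_congr rfl fun i _ => by rw [Finset.sum_mul]
    rw [hexp, hc, hd, e1]; ring
  linarith

/-- GLR identity for `H`: for every `v ∈ ℝ^{N+1}`,
`vᵀ H v = ∑_{i<j} W_{ij}(v_i−v_j)² − ∑_{i=1}^{M} z_i (v_{N+1}−v_i)²
          + ∑_{i=1}^{N} u_i v_i² + u_{N+1} v_{N+1}²`,
where `u_i = y_i + z_i` for `i ≤ M`, `u_i = y_i` for `M < i ≤ N`, and
`u_{N+1} = y_{N+1} + ∑_{j=1}^{M} z_j`. -/
theorem glr_identity_H (N M : ℕ) (hM : 1 ≤ M) (hMN : M ≤ N)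
    (W : Matrix (Fin N) (Fin N) ℝ) (hW : W.IsSymm) (hWdiag : ∀ i, W i i = 0)
    (y : Fin (N + 1) → ℝ) (z : Fin M → ℝ)
    (u : Fin (N + 1) → ℝ)
    (hu1 : ∀ (i : Fin (N + 1)) (h : (i : ℕ) < M), u i = y i + z ⟨i, h⟩)
    (hu2 : ∀ i : Fin (N + 1), M ≤ (i : ℕ) → (i : ℕ) < N → u i = y i)
    (hu3 : u (Fin.last N) = y (Fin.last N) + ∑ j, z j)
    (v : Fin (N + 1) → ℝ) :
    v ⬝ᵥ (Hmat N M (lapl N W) y z).mulVec v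
      = (∑ i : Fin N, ∑ j : Fin N,
          if i < j then W i j * (v i.castSucc - v j.castSucc) ^ 2 else 0)
        - (∑ i : Fin M, z i * (v (Fin.last N) - v (Fin.castLE (by omega) i)) ^ 2)
        + (∑ i : Fin N, u i.castSucc * v i.castSucc ^ 2)
        + u (Fin.last N) * v (Fin.last N) ^ 2 := by

  set vN := v (Fin.last N) with hvN
  set w : Fin N → ℝ := fun i => v i.castSucc with hw
  set zeta : Fin N → ℝ := fun i => if h : (i : ℕ) < M then z ⟨i, h⟩ else 0 with hzeta
  -- entry lemmas
  have hcc : ∀ i j : Fin N, Hmat N M (lapl N W) y z i.castSucc j.castSucc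
      = (if i = j then y i.castSucc else 0) + lapl N W i j := by
    intro i j
    simp [Hmat, i.isLt, j.isLt, Fin.castSucc_inj]
  have hcl : ∀ i : Fin N, Hmat N M (lapl N W) y z i.castSucc (Fin.last N) = zeta i := by
    intro i
    simp [Hmat, i.isLt, hzeta]
  have hlc : ∀ j : Fin N, Hmat N M (lapl N W) y z (Fin.last N) j.castSucc = zeta j := by
    intro j
    simp [Hmat, j.isLt, hzeta]
  have hll : Hmat N M (lapl N W) y z (Fin.last N) (Fin.last N) = y (Fin.last N) := by
    simp [Hmat]
  -- expansion of the quadratic form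
  have main : v ⬝ᵥ (Hmat N M (lapl N W) y z).mulVec v
      = (w ⬝ᵥ (lapl N W).mulVec w)
        + (∑ i : Fin N, (y i.castSucc * w i ^ 2 + 2 * (zeta i * w i * vN)))
        + y (Fin.last N) * vN ^ 2 := by
    simp only [dotProduct, mulVec]
    rw [Fin.sum_univ_castSucc]
    simp_rw [Fin.sum_univ_castSucc]
    simp only [hcc, hcl, hlc, hll, ← hvN, ← hw]
    have hlast : vN * (∑ j : Fin N, zeta j * w j + y (Fin.last N) * vN)
        = (∑ j : Fin N, vN * (zeta j * w j)) + y (Fin.last N) * vN ^ 2 := by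
      rw [mul_add, Finset.mul_sum]; ring_nf
    rw [hlast, ← add_assoc, ← Finset.sum_add_distrib]
    have hrow : ∀ i : Fin N,
        w i * (∑ j : Fin N, ((if i = j then y i.castSucc else 0) + lapl N W i j) * w j
            + zeta i * vN) + vN * (zeta i * w i)
        = w i * (∑ j : Fin N, lapl N W i j * w j)
          + (y i.castSucc * w i ^ 2 + 2 * (zeta i * w i * vN)) := by
      intro i
      have hin : ∑ j : Fin N, ((if i = j then y i.castSucc else 0) + lapl N W i j) * w j
          = y i.castSucc * w i + ∑ j : Fin N, lapl N W i j * w j := by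
        simp_rw [add_mul, ite_mul, zero_mul]
        rw [Finset.sum_add_distrib, Finset.sum_ite_eq Finset.univ i
          (fun j => y i.castSucc * w j)]
        simp
      rw [hin]; ring
    rw [Finset.sum_congr rfl fun i _ => hrow i, Finset.sum_add_distrib]
  -- rewrite the Fin M sums as Fin N sums
  have hZ : (∑ i : Fin M, z i * (vN - v (Fin.castLE (by omega) i)) ^ 2)
      = ∑ i : Fin N, zeta i * (vN - w i) ^ 2 := by
    rw [sum_eq_castLE hMN (fun i => zeta i * (vN - w i) ^ 2)
      (fun i hi => by simp [hzeta, Nat.not_lt_of_ge hi])]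
    refine (Finset.sum_congr rfl fun i _ => ?_)
    have h1 : zeta (Fin.castLE hMN i) = z i := by
      simp [hzeta, i.isLt]
    have h2 : w (Fin.castLE hMN i) = v (Fin.castLE (by omega) i) := by
      simp only [hw]
      exact congrArg v (Fin.ext rfl)
    rw [h1, h2]
  have hzsum : (∑ j, z j) = ∑ i : Fin N, zeta i := by
    rw [sum_eq_castLE hMN zeta (fun i hi => by simp [hzeta, Nat.not_lt_of_ge hi])]
    exact Finset.sum_congr rfl fun i _ => by simp [hzeta, i.isLt]
  have hu : ∀ i : Fin N, u i.castSucc = y i.castSucc + zeta i := by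
    intro i
    by_cases h : (i : ℕ) < M
    · rw [hu1 i.castSucc (by simpa using h)]
      simp [hzeta, h]
    · rw [hu2 i.castSucc (by simpa using Nat.le_of_not_lt h) (by simp [i.isLt])]
      simp [hzeta, h]
  rw [main, lapl_quad N W hW hWdiag w, hZ, hu3, hzsum]
  simp only [hu]
  have hcomb : (∑ i : Fin N, (y i.castSucc * w i ^ 2 + 2 * (zeta i * w i * vN)))
      = (∑ i : Fin N, (y i.castSucc + zeta i) * w i ^ 2)
        - (∑ i : Fin N, zeta i * (vN - w i) ^ 2)
        + (∑ i : Fin N, zeta i) * vN ^ 2 := by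
    rw [Finset.sum_mul, ← Finset.sum_sub_distrib, ← Finset.sum_add_distrib]
    exact Finset.sum_congr rfl fun i _ => by ring
  rw [hcomb]
  simp only [hw]
  ring
end
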